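/- For every annotation-free extended Plebeia node n satisfying the shape invariants (SI1), (SI2), and (SI6): if n is a Leaf, a Branch, or a Bud, then MH(n) has length exactly 28 bytes; and if n = Extender(s, n'), then MH(n) = MH(n') ++ keyBytes(s) has length 28 + length(keyBytes(s)), which is strictly greater than 28. In particular, the Merkle hash of an Extender never coincides with the Merkle hash of a non-Extender node satisfying the shape invariants. -/
import Mathlib


/-- A side is `L` or `R`. -/
inductive Side : Type
  | L | R
deriving DecidableEq, Repr

/-- A key is a list of sides. -/
abbrev Key := List Side

/-- The strict order `L < R` on sides. -/
def Side.lt : Side → Side → Prop := fun a b => a = Side.L ∧ b = Side.R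

/-- The strict lexicographic order on keys induced by `L < R`. -/
def keyLt : Key → Key → Prop := List.Lex Side.lt

/-- A list of keys is prefix-free: for any two distinct keys in it,
neither is a prefix of the other. -/
def PrefixFreeList (ks : List Key) : Prop :=
  List.Pairwise (fun a b => ¬ a <+: b ∧ ¬ b <+: a) ks

/-- A set of keys is prefix-free. -/
def PrefixFreeSet (S : Set Key) : Prop :=
  ∀ a ∈ S, ∀ b ∈ S, a ≠ b → ¬ a <+: b

/-- A list of keys is strictly increasing in the lexicographic order. -/
def SortedKeys (ks : List Key) : Prop := List.Pairwise keyLt ks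

/-- Key list of an association list is prefix-free and strictly increasing. -/
def GoodKeyList (ks : List Key) : Prop := PrefixFreeList ks ∧ SortedKeys ks

/-- Prepend the key `s` to the key of every entry. -/
def prependAll {β : Type _} (s : Key) (l : List (Key × β)) : List (Key × β) :=
  l.map (fun e => (s ++ e.1, e.2))

/-- `lookup l k` is `some` of the value of the first entry of `l` with key `k`. -/
def lookupA {β : Type _} (l : List (Key × β)) (k : Key) : Option β :=
  (l.find? (fun e => decide (e.1 = k))).map Prod.snd
/-- Annotation-free extended Plebeia nodes over a value type `α`. -/
inductive ANode (α : Type) : Type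
  | leaf : α → ANode α
  | branch : ANode α → ANode α → ANode α
  | extender : Key → ANode α → ANode α
  | bud : Option (ANode α) → ANode α

variable {α : Type}

def ANode.isExtender : ANode α → Prop
  | .extender _ _ => True
  | _ => False

def ANode.isBud : ANode α → Prop
  | .bud _ => True
  | _ => False

def ANode.isLeaf : ANode α → Prop
  | .leaf _ => True
  | _ => False

/-- Shape invariants (SI1), (SI2), (SI6) at every subtree. -/
def ANode.shapeInv : ANode α → Prop
  | .leaf _ => True
  | .branch l r => l.shapeInv ∧ r.shapeInv
  | .extender s n => (¬ n.isExtender) ∧ s ≠ [] ∧ n.shapeInv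
  | .bud none => True
  | .bud (some n) => (¬ n.isBud) ∧ (¬ n.isLeaf) ∧ n.shapeInv
/-- Byte strings: lists of 8-bit bytes. -/
abbrev Bytes := List UInt8

/-- Replace the last two bits of the last byte of `b` by the 2-bit tag `t`. -/
def setLast2 (b : Bytes) (t : UInt8) : Bytes :=
  match b.getLast? with
  | none => []
  | some x => b.dropLast ++ [(x &&& 0xfc) ||| (t &&& 0x3)]

/-- `first222 b` sets the last two bits of `b` to 0. -/
def first222 (b : Bytes) : Bytes := setLast2 b 0

/-- `hash222 B' s t`: the 28-byte string whose first 222 bits agree with those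
of `B' s` and whose last two bits are the 2-bit tag `t`. -/
def hash222 (B' : Bytes → Bytes) (s : Bytes) (t : UInt8) : Bytes :=
  setLast2 (B' s) t

/-- The Merkle hash of an annotation-free extended Plebeia node, relative to
the hash `B'`, the key encoding `keyBytes` and the length encoding `enc`. -/
def MH (B' : Bytes → Bytes) (keyBytes : Key → Bytes) (enc : ℕ → Bytes) :
    ANode Bytes → Bytes
  | .leaf v => hash222 B' v 2           -- tag 10
  | .branch l r =>
      hash222 B'
        (MH B' keyBytes enc l ++ MH B' keyBytes enc r ++
          enc (MH B' keyBytes enc r).length) 0   -- tag 00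
  | .extender s n => MH B' keyBytes enc n ++ keyBytes s
  | .bud none => List.replicate 28 0
  | .bud (some n) => hash222 B' (MH B' keyBytes enc n) 3   -- tag 11

lemma setLast2_length (b : Bytes) (hb : b ≠ []) (t : UInt8) :
    (setLast2 b t).length = b.length := by
  unfold setLast2
  rcases h : b.getLast? with _ | x
  · exact absurd (List.getLast?_eq_none_iff.mp h) hb
  · have : b.length ≠ 0 := by simpa using hb
    simp [List.length_dropLast]
    omega
    
lemma hash222_length (B' : Bytes → Bytes) (hB : ∀ s : Bytes, (B' s).length = 28)
    (s : Bytes) (t : UInt8) : (hash222 B' s t).length = 28 := by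
  unfold hash222
  rw [setLast2_length]
  · exact hB s
  · intro h; have := hB s; rw [h] at this; simp at this

/-- for every shape-invariant node: a `Leaf`, `Branch` or `Bud`
has a 28-byte Merkle hash, whereas `Extender s n'` has Merkle hash
`MH n' ++ keyBytes s` of length `28 + |keyBytes s| > 28`; in particular the
Merkle hash of an `Extender` never coincides with that of a shape-invariant
non-`Extender` node. -/
theorem stmt17 (B' : Bytes → Bytes) (hB : ∀ s : Bytes, (B' s).length = 28)
    (keyBytes : Key → Bytes) (hkinj : Function.Injective keyBytes)
    (hkne : ∀ s : Key, s ≠ [] → keyBytes s ≠ [])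
    (enc : ℕ → Bytes) :
    (∀ n : ANode Bytes, n.shapeInv → ¬ n.isExtender →
      (MH B' keyBytes enc n).length = 28) ∧
    (∀ (s : Key) (n' : ANode Bytes), (ANode.extender s n').shapeInv →
      MH B' keyBytes enc (ANode.extender s n') =
        MH B' keyBytes enc n' ++ keyBytes s ∧
      (MH B' keyBytes enc (ANode.extender s n')).length =
        28 + (keyBytes s).length ∧
      28 < (MH B' keyBytes enc (ANode.extender s n')).length) ∧
    (∀ n₁ n₂ : ANode Bytes, n₁.shapeInv → n₂.shapeInv →
      n₁.isExtender → ¬ n₂.isExtender →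
      MH B' keyBytes enc n₁ ≠ MH B' keyBytes enc n₂) := by
  have hlen : ∀ n : ANode Bytes, ¬ n.isExtender →
      (MH B' keyBytes enc n).length = 28 := by
    intro n hne
    cases n with
    | leaf v => exact hash222_length B' hB _ _
    | branch l r => exact hash222_length B' hB _ _
    | extender s n => exact absurd trivial hne
    | bud o => cases o with
      | none => simp [MH]
      | some n => exact hash222_length B' hB _ _
  have hext : ∀ (s : Key) (n' : ANode Bytes), (ANode.extender s n').shapeInv →
      MH B' keyBytes enc (ANode.extender s n') =
        MH B' keyBytes enc n' ++ keyBytes s ∧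
      (MH B' keyBytes enc (ANode.extender s n')).length =
        28 + (keyBytes s).length ∧
      28 < (MH B' keyBytes enc (ANode.extender s n')).length := by
    intro s n' hsi
    obtain ⟨h1, h2, h3⟩ := hsi
    have hl := hlen n' h1
    have hk : (keyBytes s).length ≠ 0 := by
      simpa using hkne s h2
    refine ⟨rfl, ?_, ?_⟩
    · simp [MH, hl]
    · simp [MH, hl]; omega
  refine ⟨fun n h1 h2 => hlen n h2, hext, ?_⟩
  intro n₁ n₂ h1 h2 he hne heq
  cases n₁ with
  | extender s n' =>
    have := (hext s n' h1).2.2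
    have := hlen n₂ hne
    have : (MH B' keyBytes enc (ANode.extender s n')).length =
        (MH B' keyBytes enc n₂).length := by rw [heq]
    omega
  | leaf v => exact he
  | branch l r => exact he
  | bud o => exact he
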